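/- arXiv:2601.23053 — 3 statements merged into one kernel-verified Lean document; each statement's English description precedes it below -/
import Mathlib

section
/- Let m > 0, let η, τ ∈ ℝ satisfy η² − τ² = 4, and let k, z ∈ ℝ with z² < m² + k² and z ≠ −m; set λ := √(k² + m² − z²). Then the determinant of the 2×2 complex matrix with first row (((η−τ)/2)·(λ − k)/(m + z), 1) and second row (i(η+τ)/2, i(λ + k)/(m + z)) vanishes if and only if η z + τ m = 0. Consequently, z⋆ := −τm/η is the only value of z in (−√(m²+k²), √(m²+k²)) for which the matching system for square-integrable solutions of the fiber Dirac equation admits a nontrivial solution. -/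
open Matrix Complex

/-! Since `λ² - k² = (m - z)(m + z)`, the determinant collapses to `-i (η z + τ m) / (m + z)`.
As `η² - τ² = 4` forces `η ≠ 0`, the zero set `η z + τ m = 0` can be solved for `z`. -/

theorem det_deltaShellMatching (η τ l k m z : ℂ) (hl : l ^ 2 = k ^ 2 + m ^ 2 - z ^ 2)
    (hmz : m + z ≠ 0) :
    (!![((η - τ) / 2) * ((l - k) / (m + z)), 1;
        I * (η + τ) / 2, I * ((l + k) / (m + z))]).det = -I * (η * z + τ * m) / (m + z) := by
  rw [det_fin_two_of]
  field_simp
  linear_combination (η - τ) * hl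

theorem det_deltaShellMatching_eq_zero_iff (η τ l k m z : ℂ)
    (hl : l ^ 2 = k ^ 2 + m ^ 2 - z ^ 2) (hmz : m + z ≠ 0) :
    (!![((η - τ) / 2) * ((l - k) / (m + z)), 1;
        I * (η + τ) / 2, I * ((l + k) / (m + z))]).det = 0 ↔ η * z + τ * m = 0 := by
  rw [det_deltaShellMatching η τ l k m z hl hmz, div_eq_zero_iff, neg_mul, neg_eq_zero,
    mul_eq_zero]
  simp only [I_ne_zero, hmz, false_or, or_false]

theorem critical_line_eigenvalue_general (m η τ : ℝ)
    (hcrit : η ^ 2 - τ ^ 2 = 4) (k z : ℝ)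
    (hz : z ^ 2 < m ^ 2 + k ^ 2) (hz' : z ≠ -m)
    (lam : ℝ) (hlam : lam = Real.sqrt (k ^ 2 + m ^ 2 - z ^ 2)) :
    ((!![(((η : ℂ) - τ) / 2) * (((lam : ℂ) - k) / ((m : ℂ) + z)), 1;
        Complex.I * ((η : ℂ) + τ) / 2,
        Complex.I * (((lam : ℂ) + k) / ((m : ℂ) + z))]).det = 0
      ↔ η * z + τ * m = 0) ∧
    ((!![(((η : ℂ) - τ) / 2) * (((lam : ℂ) - k) / ((m : ℂ) + z)), 1;
        Complex.I * ((η : ℂ) + τ) / 2,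
        Complex.I * (((lam : ℂ) + k) / ((m : ℂ) + z))]).det = 0
      ↔ z = -(τ * m) / η) := by
  have hη : η ≠ 0 := by
    rintro rfl
    nlinarith [sq_nonneg τ]
  have hmz : (m : ℂ) + z ≠ 0 := by
    have : m + z ≠ 0 := fun h => hz' (by linarith)
    exact_mod_cast this
  have hl : (lam : ℂ) ^ 2 = k ^ 2 + m ^ 2 - z ^ 2 := by
    rw [hlam]
    exact_mod_cast Real.sq_sqrt (by linarith : 0 ≤ k ^ 2 + m ^ 2 - z ^ 2)
  have key := (det_deltaShellMatching_eq_zero_iff η τ lam k m z hl hmz).trans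
    (by norm_cast : (η : ℂ) * z + τ * m = 0 ↔ η * z + τ * m = 0)
  refine ⟨key, key.trans ?_⟩
  rw [eq_div_iff hη]
  constructor <;> intro h <;> linarith

theorem critical_line_eigenvalue (m η τ : ℝ) (hm : 0 < m)
    (hcrit : η ^ 2 - τ ^ 2 = 4) (k z : ℝ)
    (hz : z ^ 2 < m ^ 2 + k ^ 2) (hz' : z ≠ -m)
    (lam : ℝ) (hlam : lam = Real.sqrt (k ^ 2 + m ^ 2 - z ^ 2)) :
    ((!![(((η : ℂ) - τ) / 2) * (((lam : ℂ) - k) / ((m : ℂ) + z)), 1;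
        Complex.I * ((η : ℂ) + τ) / 2,
        Complex.I * (((lam : ℂ) + k) / ((m : ℂ) + z))]).det = 0
      ↔ η * z + τ * m = 0) ∧
    ((!![(((η : ℂ) - τ) / 2) * (((lam : ℂ) - k) / ((m : ℂ) + z)), 1;
        Complex.I * ((η : ℂ) + τ) / 2,
        Complex.I * (((lam : ℂ) + k) / ((m : ℂ) + z))]).det = 0
      ↔ z = -(τ * m) / η) :=
  critical_line_eigenvalue_general m η τ hcrit k z hz hz' lam hlam
end

section
/- Let m > 0 and k, z ∈ ℝ with z² ≥ m² + k². If ψ : ℝ → ℂ² is differentiable, satisfies −i σ₁ ψ'(x) + k σ₂ ψ(x) + m σ₃ ψ(x) = z ψ(x) for all x ∈ ℝ, and is square-integrable (∫_ℝ ‖ψ(x)‖² dx < ∞), then ψ is identically zero. In other words, the fiber Dirac equation admits no nontrivial L² solutions for spectral parameters outside the gap (−√(m²+k²), √(m²+k²)). -/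
open Matrix Complex MeasureTheory

noncomputable section

/-- The Pauli matrix `σ₁`. -/
def pauli1 : Matrix (Fin 2) (Fin 2) ℂ := !![0, 1; 1, 0]

/-- The Pauli matrix `σ₂`. -/
def pauli2 : Matrix (Fin 2) (Fin 2) ℂ := !![0, -Complex.I; Complex.I, 0]

/-- The Pauli matrix `σ₃`. -/
def pauli3 : Matrix (Fin 2) (Fin 2) ℂ := !![1, 0; 0, -1]

/-!
Multiplying the equation by `iσ₁` turns it into `ψ' = Aψ` with `A² = -W`, `W = z² - m² - k² ≥ 0`.
Then `ψ'' = -Wψ`, so the energy `‖ψ'‖² + W‖ψ‖²` is constant; it is bounded by a multiple of the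
integrable function `‖ψ‖²`, and a positive constant is not integrable on `ℝ`, so the energy
vanishes. Hence `ψ' = 0`, `ψ` is constant, and integrability of `‖ψ‖²` forces `ψ = 0`.
-/

theorem nonpos_of_integrable_of_const_le {α : Type*} [MeasurableSpace α] {μ : Measure α}
    (hμ : μ Set.univ = ⊤) {f : α → ℝ} {c : ℝ} (hf : Integrable f μ) (hc : ∀ x, c ≤ f x) :
    c ≤ 0 := by
  by_contra! hpos
  have hconst : Integrable (fun _ => c) μ :=
    hf.mono' aestronglyMeasurable_const <| ae_of_all _ fun x => by
      rw [Real.norm_eq_abs, abs_of_pos hpos]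
      exact hc x
  rcases integrable_const_iff.1 hconst with hzero | _
  · exact hpos.ne' hzero
  · exact measure_ne_top μ Set.univ hμ

section EnergyMethod

variable {𝕜 F : Type*} [RCLike 𝕜] [NormedAddCommGroup F] [InnerProductSpace 𝕜 F]
  [NormedSpace ℝ F]

theorem norm_sq_add_mul_norm_sq_eq_of_hasDerivAt {u v : ℝ → F} {W : ℝ}
    (hu : ∀ x, HasDerivAt u (v x) x) (hv : ∀ x, HasDerivAt v (-(W : 𝕜) • u x) x) (x y : ℝ) :
    ‖v x‖ ^ 2 + W * ‖u x‖ ^ 2 = ‖v y‖ ^ 2 + W * ‖u y‖ ^ 2 := by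
  have hE : ∀ x, HasDerivAt (fun t => ‖v t‖ ^ 2 + W * ‖u t‖ ^ 2) 0 x := by
    intro x
    simp only [norm_sq_eq_re_inner (𝕜 := 𝕜)]
    have h := (RCLike.reCLM.hasFDerivAt.comp_hasDerivAt x ((hv x).inner 𝕜 (hv x))).add
      ((RCLike.reCLM.hasFDerivAt.comp_hasDerivAt x ((hu x).inner 𝕜 (hu x))).const_mul W)
    refine h.congr_deriv ?_
    simp only [RCLike.reCLM_apply, inner_smul_left, inner_smul_right, map_add, RCLike.conj_ofReal,
      neg_mul, map_neg, RCLike.re_ofReal_mul, inner_re_symm (𝕜 := 𝕜) (u x)]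
    ring
  exact is_const_of_deriv_eq_zero (fun t => (hE t).differentiableAt) (fun t => (hE t).deriv) x y

theorem eq_zero_of_hasDerivAt_of_integrable_norm_sq [IsScalarTower ℝ 𝕜 F] {L : F →L[𝕜] F}
    {W : ℝ} (hW : 0 ≤ W) (hL : ∀ v, L (L v) = -(W : 𝕜) • v) {u : ℝ → F}
    (hu : ∀ x, HasDerivAt u (L (u x)) x) (hint : Integrable (fun x => ‖u x‖ ^ 2)) (x : ℝ) :
    u x = 0 := by
  have hLu : ∀ x, HasDerivAt (fun t => L (u t)) (-(W : 𝕜) • u x) x := fun x =>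
    hL (u x) ▸ (L.restrictScalars ℝ).hasFDerivAt.comp_hasDerivAt x (hu x)
  have henergy := norm_sq_add_mul_norm_sq_eq_of_hasDerivAt hu hLu
  have henergy_nonpos : ‖L (u 0)‖ ^ 2 + W * ‖u 0‖ ^ 2 ≤ 0 := by
    refine nonpos_of_integrable_of_const_le Real.volume_univ
      (hint.const_mul (‖L‖ ^ 2 + W)) fun t => ?_
    calc ‖L (u 0)‖ ^ 2 + W * ‖u 0‖ ^ 2 = ‖L (u t)‖ ^ 2 + W * ‖u t‖ ^ 2 := henergy 0 t
      _ ≤ (‖L‖ * ‖u t‖) ^ 2 + W * ‖u t‖ ^ 2 := by gcongr; exact L.le_opNorm (u t)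
      _ = (‖L‖ ^ 2 + W) * ‖u t‖ ^ 2 := by ring
  have hLu_zero : ∀ t, L (u t) = 0 := fun t => by
    have hE := (henergy t 0).trans_le henergy_nonpos
    have hsq : ‖L (u t)‖ ^ 2 ≤ 0 := by linarith [mul_nonneg hW (sq_nonneg ‖u t‖)]
    exact norm_eq_zero.1 ((sq_nonpos_iff _).1 hsq)
  have hconst : ∀ t, u t = u x := fun t =>
    is_const_of_deriv_eq_zero (fun t => (hu t).differentiableAt)
      (fun t => by rw [(hu t).deriv, hLu_zero]) t x
  have hsq : ‖u x‖ ^ 2 ≤ 0 :=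
    nonpos_of_integrable_of_const_le Real.volume_univ hint fun t => by rw [hconst t]
  exact norm_eq_zero.1 ((sq_nonpos_iff _).1 hsq)

end EnergyMethod

/-- The matrix `iσ₁(z - kσ₂ - mσ₃)`, written out. -/
def fiberDiracMatrix (m k z : ℝ) : Matrix (Fin 2) (Fin 2) ℂ :=
  !![k, I * (z + m); I * (z - m), -k]

theorem fiberDiracMatrix_mul_self (m k z : ℝ) :
    fiberDiracMatrix m k z * fiberDiracMatrix m k z = -((z ^ 2 - m ^ 2 - k ^ 2 : ℝ) : ℂ) • 1 := by
  rw [fiberDiracMatrix, mul_fin_two, one_fin_two]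
  ext i j
  fin_cases i <;> fin_cases j <;>
    simp only [Fin.zero_eta, Fin.mk_one, of_apply, cons_val', cons_val_zero, cons_val_one,
      cons_val_fin_one, Matrix.smul_apply, smul_eq_mul, mul_one, mul_zero, ofReal_sub, ofReal_pow]
  · linear_combination ((z : ℂ) ^ 2 - m ^ 2) * I_sq
  · ring
  · ring
  · linear_combination ((z : ℂ) ^ 2 - m ^ 2) * I_sq

theorem eq_fiberDiracMatrix_mulVec {m k z : ℝ} {ψ ψ' : Fin 2 → ℂ}
    (h : (-I) • pauli1.mulVec ψ' + (k : ℂ) • pauli2.mulVec ψ + (m : ℂ) • pauli3.mulVec ψ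
      = (z : ℂ) • ψ) :
    ψ' = fiberDiracMatrix m k z *ᵥ ψ := by
  have h0 := congrFun h 0
  have h1 := congrFun h 1
  simp only [pauli1, pauli2, pauli3, cons_mulVec, empty_mulVec, dotProduct, Fin.sum_univ_two,
    Fin.isValue, cons_val_zero, cons_val_one, cons_val_fin_one, head_cons, tail_cons, zero_mul,
    one_mul, zero_add, add_zero, neg_smul, smul_cons, smul_eq_mul, smul_empty, neg_cons, neg_empty,
    neg_mul, mul_neg, add_cons, empty_add_empty, Pi.add_apply, Pi.smul_apply] at h0 h1
  ext i
  fin_cases i <;>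
    simp only [fiberDiracMatrix, mulVec, dotProduct, Fin.sum_univ_two, Fin.zero_eta, Fin.mk_one,
      Fin.isValue, of_apply, cons_val', cons_val_fin_one, cons_val_zero, cons_val_one, neg_mul]
  · linear_combination I * h1 + (ψ' 0 - k * ψ 0) * I_sq
  · linear_combination I * h0 + (ψ' 1 + k * ψ 1) * I_sq

theorem no_L2_solutions_outside_gap_general (m k z : ℝ)
    (hz : m ^ 2 + k ^ 2 ≤ z ^ 2) (ψ : ℝ → Fin 2 → ℂ)
    (hdiff : Differentiable ℝ ψ)
    (hode : ∀ x : ℝ,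
      (-Complex.I) • pauli1.mulVec (deriv ψ x) + (k : ℂ) • pauli2.mulVec (ψ x)
        + (m : ℂ) • pauli3.mulVec (ψ x) = (z : ℂ) • ψ x)
    (hL2 : Integrable (fun x : ℝ => ‖ψ x 0‖ ^ 2 + ‖ψ x 1‖ ^ 2)) :
    ∀ x : ℝ, ψ x = 0 := by
  set L := toEuclideanCLM (𝕜 := ℂ) (fiberDiracMatrix m k z)
  set u : ℝ → EuclideanSpace ℂ (Fin 2) := fun t => WithLp.toLp 2 (ψ t)
  have hL : ∀ v, L (L v) = -((z ^ 2 - m ^ 2 - k ^ 2 : ℝ) : ℂ) • v := fun v => by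
    change (L * L) v = _
    rw [← map_mul, fiberDiracMatrix_mul_self, map_smul, map_one, _root_.smul_apply,
      one_apply_eq_self]
  have hu : ∀ x, HasDerivAt u (L (u x)) x := fun x => by
    rw [toEuclideanCLM_toLp, ← eq_fiberDiracMatrix_mulVec (hode x)]
    exact (PiLp.hasFDerivAt_toLp 2 (ψ x)).comp_hasDerivAt x (hdiff x).hasDerivAt
  have hint : Integrable (fun x => ‖u x‖ ^ 2) := by
    simpa only [EuclideanSpace.norm_sq_eq, Fin.sum_univ_two] using hL2
  have hW : 0 ≤ z ^ 2 - m ^ 2 - k ^ 2 := by linarith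
  exact fun x => WithLp.toLp_injective 2 <|
    eq_zero_of_hasDerivAt_of_integrable_norm_sq hW hL hu hint x

theorem no_L2_solutions_outside_gap (m k z : ℝ) (hm : 0 < m)
    (hz : m ^ 2 + k ^ 2 ≤ z ^ 2) (ψ : ℝ → Fin 2 → ℂ)
    (hdiff : Differentiable ℝ ψ)
    (hode : ∀ x : ℝ,
      (-Complex.I) • pauli1.mulVec (deriv ψ x) + (k : ℂ) • pauli2.mulVec (ψ x)
        + (m : ℂ) • pauli3.mulVec (ψ x) = (z : ℂ) • ψ x)
    (hL2 : Integrable (fun x : ℝ => ‖ψ x 0‖ ^ 2 + ‖ψ x 1‖ ^ 2)) :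
    ∀ x : ℝ, ψ x = 0 :=
  no_L2_solutions_outside_gap_general m k z hz ψ hdiff hode hL2
end
end

section
/- Let m > 0, z ∈ (−m, m), k ∈ ℤ, and set κ := √(m² − z²) > 0. Define u_I(r) := I_k(κr) and v_I(r) := −i √((m−z)/(m+z)) · I_{k+1}(κr), and also u_K(r) := K_k(κr) and v_K(r) := +i √((m−z)/(m+z)) · K_{k+1}(κr). Then both pairs (u, v) = (u_I, v_I) and (u, v) = (u_K, v_K) satisfy, for every r > 0, the radial Dirac system i v'(r) + i((k+1)/r) v(r) − (m − z) u(r) = 0 and i u'(r) − i(k/r) u(r) + (m + z) v(r) = 0. -/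
open Complex MeasureTheory

noncomputable section

/-- Modified Bessel function of the first kind of integer order `k`. -/
def besselI (k : ℤ) (t : ℝ) : ℝ :=
  (1 / Real.pi) * ∫ θ in (0:ℝ)..Real.pi, Real.exp (t * Real.cos θ) * Real.cos (k * θ)

/-- Modified Bessel function of the second kind of integer order `k`. -/
def besselK (k : ℤ) (t : ℝ) : ℝ :=
  ∫ s in Set.Ioi (0:ℝ), Real.exp (-t * Real.cosh s) * Real.cosh (k * s)

/-!
Both integral representations yield, by differentiating under the integral sign and by
integrating the derivative of `exp (t cos θ) sin (k θ)`, resp. `exp (-t cosh s) sinh (k s)`,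
which vanishes at both ends of the range, the recurrences `F_k' = σ (F_{k-1} + F_{k+1}) / 2`
and `k F_k = σ t (F_{k-1} - F_{k+1}) / 2`, with `σ = 1` for `I` and `σ = -1` for `K`; at
infinity `exp (-t cosh s)` beats every exponential, which gives both integrability and the
vanishing. Eliminating `F_{k-1}`, resp. `F_{k+1}`, gives the ladder relations
`F_k' = σ F_{k+1} + (k/t) F_k` and `F_{k+1}' = σ F_k - ((k+1)/t) F_{k+1}`. For `u = F_k (κ r)`
and `v = c F_{k+1} (κ r)` the `1/r` terms of the radial system then cancel, and the system
reduces to `i σ κ c = m - z` and `(m + z) c = -i σ κ`, which `c = -σ i √((m-z)/(m+z))`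
satisfies because `κ² = (m - z)(m + z)`.
-/

open Set Filter Topology

-- Inside `namespace Real`, `exp`, `cos`, `cosh`, ... resolve to the real functions despite
-- `open Complex`.
namespace Real

lemma one_add_sq_div_four_le_cosh {s : ℝ} (hs : 0 ≤ s) : 1 + s ^ 2 / 4 ≤ cosh s := by
  rw [cosh_eq]
  linarith [quadratic_le_exp_of_nonneg hs, add_one_le_exp (-s)]

lemma abs_cosh_le_exp_abs (x : ℝ) : |cosh x| ≤ exp |x| := by
  rw [abs_of_pos (cosh_pos x), ← cosh_abs, cosh_eq]
  linarith [exp_le_exp.2 (neg_le_self (abs_nonneg x))]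

lemma abs_sinh_le_exp_abs (x : ℝ) : |sinh x| ≤ exp |x| := by
  rw [abs_sinh, sinh_eq]
  linarith [exp_pos (-|x|), exp_pos |x|]

lemma exp_mul_sub_mul_cosh_le {c t s : ℝ} (ht : 0 < t) (hs : 0 ≤ s) :
    exp (c * s - t * cosh s) ≤ exp ((c + 1) ^ 2 / t - t) * exp (-s) := by
  rw [← exp_add, exp_le_exp]
  have hcosh := mul_le_mul_of_nonneg_left (one_add_sq_div_four_le_cosh hs) ht.le
  have hamgm : (c + 1) * s - t * s ^ 2 / 4 ≤ (c + 1) ^ 2 / t := by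
    rw [le_div_iff₀ ht]
    nlinarith [sq_nonneg (c + 1 - t * s / 2)]
  linarith

lemma norm_exp_neg_mul_cosh_mul_le {t c C s : ℝ} {f : ℝ → ℝ} (ht : 0 < t) (hs : 0 ≤ s)
    (hf : |f s| ≤ C * exp (c * s)) :
    ‖exp (-t * cosh s) * f s‖ ≤ C * exp ((c + 1) ^ 2 / t - t) * exp (-s) := by
  have hC : 0 ≤ C := nonneg_of_mul_nonneg_left ((abs_nonneg _).trans hf) (exp_pos _)
  calc ‖exp (-t * cosh s) * f s‖ = exp (-t * cosh s) * |f s| := by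
        rw [norm_mul, norm_of_nonneg (exp_pos _).le, norm_eq_abs]
    _ ≤ exp (-t * cosh s) * (C * exp (c * s)) := by gcongr
    _ = C * exp (c * s - t * cosh s) := by rw [sub_eq_add_neg, exp_add]; ring_nf
    _ ≤ C * (exp ((c + 1) ^ 2 / t - t) * exp (-s)) := by
        gcongr
        exact exp_mul_sub_mul_cosh_le ht hs
    _ = _ := by ring

lemma integrableOn_exp_neg_mul_cosh_mul {t c C : ℝ} {f : ℝ → ℝ} (ht : 0 < t)
    (hf : Continuous f) (hbound : ∀ s, 0 < s → |f s| ≤ C * exp (c * s)) :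
    IntegrableOn (fun s => exp (-t * cosh s) * f s) (Ioi 0) := by
  refine Integrable.mono' ((integrableOn_exp_neg_Ioi 0).const_mul (C * exp ((c + 1) ^ 2 / t - t)))
    (by fun_prop : Continuous fun s => exp (-t * cosh s) * f s).aestronglyMeasurable ?_
  filter_upwards [ae_restrict_mem measurableSet_Ioi] with s hs
  exact norm_exp_neg_mul_cosh_mul_le ht (le_of_lt hs) (hbound s hs)

lemma tendsto_exp_neg_mul_cosh_mul_atTop {t c C : ℝ} {f : ℝ → ℝ} (ht : 0 < t)
    (hbound : ∀ s, 0 < s → |f s| ≤ C * exp (c * s)) :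
    Tendsto (fun s => exp (-t * cosh s) * f s) atTop (𝓝 0) := by
  have hdecay := tendsto_exp_neg_atTop_nhds_zero.const_mul (C * exp ((c + 1) ^ 2 / t - t))
  rw [mul_zero] at hdecay
  refine squeeze_zero_norm' ?_ hdecay
  filter_upwards [eventually_gt_atTop 0] with s hs
  exact norm_exp_neg_mul_cosh_mul_le ht hs.le (hbound s hs)

theorem hasDerivAt_integral_exp_mul {α : Type*} [MeasurableSpace α] {μ : Measure α}
    {φ ψ : α → ℝ} (hφ : AEStronglyMeasurable φ μ) (hψ : AEStronglyMeasurable ψ μ)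
    {t ε : ℝ} (hε : 0 < ε) (hint : Integrable (fun a => exp (t * φ a) * ψ a) μ)
    (hdom : Integrable (fun a => exp (t * φ a + ε * |φ a|) * φ a * ψ a) μ) :
    HasDerivAt (fun x => ∫ a, exp (x * φ a) * ψ a ∂μ)
      (∫ a, exp (t * φ a) * φ a * ψ a ∂μ) t := by
  have hexp (x : ℝ) : AEStronglyMeasurable (fun a => exp (x * φ a)) μ :=
    continuous_exp.comp_aestronglyMeasurable (hφ.const_mul x)
  refine (hasDerivAt_integral_of_dominated_loc_of_deriv_le
    (F' := fun x a => exp (x * φ a) * φ a * ψ a) (Metric.ball_mem_nhds t hε)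
    (.of_forall fun x => (hexp x).mul hψ) hint (((hexp t).mul hφ).mul hψ) ?_ hdom.norm ?_).2
  · filter_upwards with a x hx
    rw [Metric.mem_ball, dist_eq] at hx
    have hshift : (x - t) * φ a ≤ ε * |φ a| :=
      (le_abs_self _).trans (by rw [abs_mul]; gcongr)
    simp only [norm_mul, norm_of_nonneg (exp_pos _).le]
    gcongr
    linarith
  · filter_upwards with a x _
    exact ((hasDerivAt_mul_const (φ a)).exp).mul_const (ψ a)

lemma _root_.besselI_eq_integral_Ioc (k : ℤ) :
    besselI k = fun t => π⁻¹ * ∫ θ in Ioc 0 π, exp (t * cos θ) * cos (k * θ) := by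
  ext t
  rw [besselI, intervalIntegral.integral_of_le pi_pos.le, one_div]

lemma _root_.besselI_hasDerivAt (k : ℤ) (t : ℝ) :
    HasDerivAt (besselI k) ((besselI (k - 1) t + besselI (k + 1) t) / 2) t := by
  have hint (j : ℤ) : IntegrableOn (fun θ => exp (t * cos θ) * cos (j * θ)) (Ioc 0 π) :=
    Continuous.integrableOn_Ioc (by fun_prop)
  have hprod (θ : ℝ) : exp (t * cos θ) * cos θ * cos (k * θ) = (exp (t * cos θ) *
      cos ((k - 1 : ℤ) * θ) + exp (t * cos θ) * cos ((k + 1 : ℤ) * θ)) / 2 := by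
    push_cast
    rw [sub_mul, add_mul, one_mul, cos_sub, cos_add]
    ring
  have hleibniz := hasDerivAt_integral_exp_mul (μ := volume.restrict (Ioc 0 π))
    (ψ := fun θ => cos (k * θ)) continuous_cos.aestronglyMeasurable
    (by fun_prop : Continuous fun θ : ℝ => cos (k * θ)).aestronglyMeasurable one_pos (hint k)
    (Continuous.integrableOn_Ioc (by fun_prop))
  simp only [hprod] at hleibniz
  rw [integral_div, integral_add (hint _) (hint _)] at hleibniz
  simp only [besselI_eq_integral_Ioc]
  exact (hleibniz.const_mul π⁻¹).congr_deriv (by ring)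

lemma _root_.besselI_recurrence (k : ℤ) (t : ℝ) :
    k * besselI k t = t / 2 * (besselI (k - 1) t - besselI (k + 1) t) := by
  have hint (j : ℤ) :
      IntervalIntegrable (fun θ => exp (t * cos θ) * cos (j * θ)) volume 0 π :=
    Continuous.intervalIntegrable (by fun_prop) _ _
  have hderiv (θ : ℝ) : HasDerivAt (fun θ => exp (t * cos θ) * sin (k * θ))
      (k * (exp (t * cos θ) * cos (k * θ)) - t / 2 * (exp (t * cos θ) * cos ((k - 1 : ℤ) * θ)
        - exp (t * cos θ) * cos ((k + 1 : ℤ) * θ))) θ := by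
    refine (((hasDerivAt_cos θ).const_mul t).exp.mul
      (hasDerivAt_const_mul (k : ℝ)).sin).congr_deriv ?_
    push_cast
    rw [sub_mul, add_mul, one_mul, cos_sub, cos_add]
    ring
  have hvanish := intervalIntegral.integral_eq_sub_of_hasDerivAt (fun θ _ => hderiv θ)
    (((hint k).const_mul _).sub (((hint _).sub (hint _)).const_mul _))
  rw [intervalIntegral.integral_sub ((hint k).const_mul _) (((hint _).sub (hint _)).const_mul _),
    intervalIntegral.integral_const_mul, intervalIntegral.integral_const_mul,
    intervalIntegral.integral_sub (hint _) (hint _)] at hvanish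
  simp only [mul_zero, sin_zero, sin_int_mul_pi, sub_zero] at hvanish
  simp only [besselI]
  linear_combination π⁻¹ * hvanish

lemma _root_.integrableOn_besselK_integrand (j : ℤ) {t : ℝ} (ht : 0 < t) :
    IntegrableOn (fun s => exp (-t * cosh s) * cosh (j * s)) (Ioi 0) :=
  integrableOn_exp_neg_mul_cosh_mul (C := 1) ht (by fun_prop) fun s hs => by
    simpa [abs_mul, abs_of_pos hs] using abs_cosh_le_exp_abs (j * s)

lemma _root_.besselK_hasDerivAt (k : ℤ) {t : ℝ} (ht : 0 < t) :
    HasDerivAt (besselK k) (-((besselK (k - 1) t + besselK (k + 1) t) / 2)) t := by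
  have hK (j : ℤ) : besselK j = fun x => ∫ s in Ioi 0, exp (x * -cosh s) * cosh (j * s) := by
    ext x
    simp only [besselK, mul_neg, neg_mul]
  have hint (j : ℤ) : IntegrableOn (fun s => exp (t * -cosh s) * cosh (j * s)) (Ioi 0) := by
    simpa only [mul_neg, neg_mul] using integrableOn_besselK_integrand j ht
  have hdom : IntegrableOn
      (fun s => exp (t * -cosh s + t / 2 * |-cosh s|) * -cosh s * cosh (k * s)) (Ioi 0) := by
    refine (integrableOn_exp_neg_mul_cosh_mul (c := 1 + |(k : ℝ)|) (C := 1) (half_pos ht)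
      (f := fun s => -(cosh s * cosh (k * s))) (by fun_prop) fun s hs => ?_).congr_fun
      (fun s _ => ?_) measurableSet_Ioi
    · have hcosh := abs_cosh_le_exp_abs s
      have hcoshk := abs_cosh_le_exp_abs (k * s)
      rw [abs_of_pos hs] at hcosh
      rw [abs_mul, abs_of_pos hs] at hcoshk
      rw [abs_neg, abs_mul, one_mul, add_mul, one_mul, exp_add]
      gcongr
    · rw [abs_neg, abs_of_pos (cosh_pos s)]
      ring_nf
  have hprod (s : ℝ) : exp (t * -cosh s) * -cosh s * cosh (k * s) = -((exp (t * -cosh s) *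
      cosh ((k - 1 : ℤ) * s) + exp (t * -cosh s) * cosh ((k + 1 : ℤ) * s)) / 2) := by
    push_cast
    rw [sub_mul, add_mul, one_mul, cosh_sub, cosh_add]
    ring
  have hleibniz := hasDerivAt_integral_exp_mul (μ := volume.restrict (Ioi 0)) (ε := t / 2)
    (ψ := fun s => cosh (k * s)) (φ := fun s => -cosh s)
    (by fun_prop : Continuous fun s : ℝ => -cosh s).aestronglyMeasurable
    (by fun_prop : Continuous fun s : ℝ => cosh (k * s)).aestronglyMeasurable (half_pos ht)
    (hint k) hdom
  simp only [hprod] at hleibniz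
  rw [integral_neg, integral_div, integral_add (hint _) (hint _)] at hleibniz
  simpa only [hK] using hleibniz

lemma _root_.besselK_recurrence (k : ℤ) {t : ℝ} (ht : 0 < t) :
    k * besselK k t = -(t / 2 * (besselK (k - 1) t - besselK (k + 1) t)) := by
  have hint (j : ℤ) := integrableOn_besselK_integrand j ht
  have hderiv (s : ℝ) : HasDerivAt (fun s => exp (-t * cosh s) * sinh (k * s))
      (k * (exp (-t * cosh s) * cosh (k * s)) - t / 2 * (exp (-t * cosh s) *
        cosh ((k + 1 : ℤ) * s) - exp (-t * cosh s) * cosh ((k - 1 : ℤ) * s))) s := by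
    refine (((hasDerivAt_cosh s).const_mul (-t)).exp.mul
      (hasDerivAt_const_mul (k : ℝ)).sinh).congr_deriv ?_
    push_cast
    rw [sub_mul, add_mul, one_mul, cosh_sub, cosh_add]
    ring
  have hdecay : Tendsto (fun s => exp (-t * cosh s) * sinh (k * s)) atTop (𝓝 0) :=
    tendsto_exp_neg_mul_cosh_mul_atTop (C := 1) ht fun s hs => by
      simpa [abs_mul, abs_of_pos hs] using abs_sinh_le_exp_abs (k * s)
  have hvanish := integral_Ioi_of_hasDerivAt_of_tendsto' (fun s _ => hderiv s)
    (((hint k).const_mul _).sub' (((hint _).sub' (hint _)).const_mul _)) hdecay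
  rw [integral_sub ((hint k).const_mul _) (((hint _).sub' (hint _)).const_mul _),
    integral_const_mul, integral_const_mul, integral_sub (hint _) (hint _)] at hvanish
  simp only [mul_zero, sinh_zero, sub_zero] at hvanish
  simp only [besselK]
  linear_combination hvanish

end Real

def SatisfiesBesselRecurrences (σ : ℝ) (F : ℤ → ℝ → ℝ) : Prop :=
  ∀ k : ℤ, ∀ t : ℝ, 0 < t →
    HasDerivAt (F k) (σ * ((F (k - 1) t + F (k + 1) t) / 2)) t ∧
      k * F k t = σ * (t / 2 * (F (k - 1) t - F (k + 1) t))

theorem besselI_satisfiesBesselRecurrences : SatisfiesBesselRecurrences 1 besselI :=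
  fun k t _ => ⟨by simpa only [one_mul] using besselI_hasDerivAt k t,
    by rw [one_mul]; exact besselI_recurrence k t⟩

theorem besselK_satisfiesBesselRecurrences : SatisfiesBesselRecurrences (-1) besselK :=
  fun k _ ht => ⟨by simpa only [neg_one_mul] using besselK_hasDerivAt k ht,
    by rw [neg_one_mul]; exact besselK_recurrence k ht⟩

namespace SatisfiesBesselRecurrences

variable {σ : ℝ} {F : ℤ → ℝ → ℝ}

theorem hasDerivAt_raise (hF : SatisfiesBesselRecurrences σ F) (k : ℤ) {t : ℝ} (ht : 0 < t) :
    HasDerivAt (F k) (σ * F (k + 1) t + k / t * F k t) t := by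
  obtain ⟨hderiv, hrec⟩ := hF k t ht
  refine hderiv.congr_deriv ?_
  rw [div_mul_eq_mul_div, hrec]
  field_simp
  ring

theorem hasDerivAt_lower (hF : SatisfiesBesselRecurrences σ F) (k : ℤ) {t : ℝ} (ht : 0 < t) :
    HasDerivAt (F k) (σ * F (k - 1) t - k / t * F k t) t := by
  obtain ⟨hderiv, hrec⟩ := hF k t ht
  refine hderiv.congr_deriv ?_
  rw [div_mul_eq_mul_div, hrec]
  field_simp
  ring

theorem solves_radial_dirac (hF : SatisfiesBesselRecurrences σ F) (k : ℤ) {m z κ : ℝ}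
    {c : ℂ} (hκ : 0 < κ) (hc₁ : I * σ * κ * c = m - z)
    (hc₂ : (m + z) * c = -(I * σ * κ))
    {r : ℝ} (hr : 0 < r) :
    I * deriv (fun r : ℝ => c * (F (k + 1) (κ * r) : ℂ)) r
        + I * (((k : ℂ) + 1) / (r : ℂ)) * (c * (F (k + 1) (κ * r) : ℂ))
        - ((m : ℂ) - (z : ℂ)) * (F k (κ * r) : ℂ) = 0 ∧
      I * deriv (fun r : ℝ => (F k (κ * r) : ℂ)) r
        - I * ((k : ℂ) / (r : ℂ)) * (F k (κ * r) : ℂ)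
        + ((m : ℂ) + (z : ℂ)) * (c * (F (k + 1) (κ * r) : ℂ)) = 0 := by
  have ht : 0 < κ * r := mul_pos hκ hr
  have hscale (j : ℤ) {f' : ℝ} (h : HasDerivAt (F j) f' (κ * r)) :
      HasDerivAt (fun r : ℝ => (F j (κ * r) : ℂ)) ((f' * κ : ℝ) : ℂ) r :=
    (h.comp r (hasDerivAt_const_mul κ)).ofReal_comp
  have hu := hscale k (hF.hasDerivAt_raise k ht)
  have hv := (hscale (k + 1) (hF.hasDerivAt_lower (k + 1) ht)).const_mul c
  rw [hu.deriv, hv.deriv]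
  simp only [add_sub_cancel_right]
  push_cast
  have hκ' : (κ : ℂ) ≠ 0 := ofReal_ne_zero.2 hκ.ne'
  have hr' : (r : ℂ) ≠ 0 := ofReal_ne_zero.2 hr.ne'
  constructor
  · linear_combination (norm := skip) (F k (κ * r) : ℂ) * hc₁
    field_simp
    ring
  · linear_combination (norm := skip) (F (k + 1) (κ * r) : ℂ) * hc₂
    field_simp
    ring

end SatisfiesBesselRecurrences

theorem radial_dirac_solutions_general (m z : ℝ) (hz : z ∈ Set.Ioo (-m) m)
    (k : ℤ) (κ : ℝ) (hκ : κ = Real.sqrt (m ^ 2 - z ^ 2)) :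
    0 < κ ∧
    ∀ uI vI uK vK : ℝ → ℂ,
      (uI = fun r : ℝ => ((besselI k (κ * r) : ℝ) : ℂ)) →
      (vI = fun r : ℝ => -Complex.I * (Real.sqrt ((m - z) / (m + z)) : ℂ) *
        ((besselI (k + 1) (κ * r) : ℝ) : ℂ)) →
      (uK = fun r : ℝ => ((besselK k (κ * r) : ℝ) : ℂ)) →
      (vK = fun r : ℝ => Complex.I * (Real.sqrt ((m - z) / (m + z)) : ℂ) *
        ((besselK (k + 1) (κ * r) : ℝ) : ℂ)) →
      (∀ r : ℝ, 0 < r →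
        (Complex.I * deriv vI r + Complex.I * (((k : ℂ) + 1) / (r : ℂ)) * vI r
            - ((m : ℂ) - (z : ℂ)) * uI r = 0 ∧
         Complex.I * deriv uI r - Complex.I * ((k : ℂ) / (r : ℂ)) * uI r
            + ((m : ℂ) + (z : ℂ)) * vI r = 0)) ∧
      (∀ r : ℝ, 0 < r →
        (Complex.I * deriv vK r + Complex.I * (((k : ℂ) + 1) / (r : ℂ)) * vK r
            - ((m : ℂ) - (z : ℂ)) * uK r = 0 ∧
         Complex.I * deriv uK r - Complex.I * ((k : ℂ) / (r : ℂ)) * uK r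
            + ((m : ℂ) + (z : ℂ)) * vK r = 0)) := by
  obtain ⟨hmz, hzm⟩ := hz
  have hsub : 0 < m - z := by linarith
  have hadd : 0 < m + z := by linarith
  have hκsq : κ ^ 2 = (m - z) * (m + z) := by
    rw [hκ, Real.sq_sqrt (by nlinarith)]
    ring
  have hκpos : 0 < κ := hκ ▸ Real.sqrt_pos.2 (by nlinarith)
  have ha : Real.sqrt ((m - z) / (m + z)) = (m - z) / κ := by
    rw [← Real.sqrt_sq (div_pos hsub hκpos).le, div_pow, hκsq]
    field_simp
  have hκ' : (κ : ℂ) ≠ 0 := ofReal_ne_zero.2 hκpos.ne'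
  have hκsq' : (κ : ℂ) ^ 2 = (m - z) * (m + z) := by exact_mod_cast hκsq
  refine ⟨hκpos, fun uI vI uK vK huI hvI huK hvK => ?_⟩
  subst huI hvI huK hvK
  rw [ha]
  refine ⟨fun r hr => besselI_satisfiesBesselRecurrences.solves_radial_dirac k hκpos ?_ ?_ hr,
    fun r hr => besselK_satisfiesBesselRecurrences.solves_radial_dirac k hκpos ?_ ?_ hr⟩
  all_goals push_cast; field_simp; simp only [I_sq, hκsq']; ring

theorem radial_dirac_solutions (m z : ℝ) (hm : 0 < m) (hz : z ∈ Set.Ioo (-m) m)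
    (k : ℤ) (κ : ℝ) (hκ : κ = Real.sqrt (m ^ 2 - z ^ 2)) :
    0 < κ ∧
    ∀ uI vI uK vK : ℝ → ℂ,
      (uI = fun r : ℝ => ((besselI k (κ * r) : ℝ) : ℂ)) →
      (vI = fun r : ℝ => -Complex.I * (Real.sqrt ((m - z) / (m + z)) : ℂ) *
        ((besselI (k + 1) (κ * r) : ℝ) : ℂ)) →
      (uK = fun r : ℝ => ((besselK k (κ * r) : ℝ) : ℂ)) →
      (vK = fun r : ℝ => Complex.I * (Real.sqrt ((m - z) / (m + z)) : ℂ) *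
        ((besselK (k + 1) (κ * r) : ℝ) : ℂ)) →
      (∀ r : ℝ, 0 < r →
        (Complex.I * deriv vI r + Complex.I * (((k : ℂ) + 1) / (r : ℂ)) * vI r
            - ((m : ℂ) - (z : ℂ)) * uI r = 0 ∧
         Complex.I * deriv uI r - Complex.I * ((k : ℂ) / (r : ℂ)) * uI r
            + ((m : ℂ) + (z : ℂ)) * vI r = 0)) ∧
      (∀ r : ℝ, 0 < r →
        (Complex.I * deriv vK r + Complex.I * (((k : ℂ) + 1) / (r : ℂ)) * vK r
            - ((m : ℂ) - (z : ℂ)) * uK r = 0 ∧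
         Complex.I * deriv uK r - Complex.I * ((k : ℂ) / (r : ℂ)) * uK r
            + ((m : ℂ) + (z : ℂ)) * vK r = 0)) :=
  radial_dirac_solutions_general m z hz k κ hκ
end
end
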